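/- arXiv:math/0503189 — 7 statements merged into one kernel-verified Lean document; each statement's English description precedes it below -/
import Mathlib

section
/- Let V be a finite-dimensional real vector space with an internal direct sum decomposition V = ℝx ⊕ W⁺ ⊕ W⁻, where x ≠ 0. Let ω be an alternating bilinear form on V whose radical is exactly the line ℝx and which vanishes on W⁺ × W⁺ and on W⁻ × W⁻. Let g be a symmetric bilinear form on V such that g(x,x) = 1, g(x,w) = 0 for all w ∈ W⁺ and all w ∈ W⁻, g vanishes on W⁺ × W⁺ and on W⁻ × W⁻, and g(u,v) = ω(u,v) for all u ∈ W⁺ and v ∈ W⁻. Then g is nondegenerate. -/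
/-- If `V = ℝx ⊕ W⁺ ⊕ W⁻` (internal direct sum, `x ≠ 0`), `ω` is an alternating
bilinear form whose radical is exactly the line `ℝx` and which vanishes on
`W⁺ × W⁺` and `W⁻ × W⁻`, and `g` is a symmetric bilinear form with `g(x,x) = 1`,
`g(x, W⁺ ⊕ W⁻) = 0`, `g` vanishing on `W⁺ × W⁺` and `W⁻ × W⁻`, and agreeing with
`ω` on `W⁺ × W⁻`, then `g` is nondegenerate. -/
theorem stmt_1 (V : Type*) [AddCommGroup V] [Module ℝ V] [FiniteDimensional ℝ V]
    (x : V) (hx : x ≠ 0) (Wp Wm : Submodule ℝ V)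
    (hdec : DirectSum.IsInternal (![Submodule.span ℝ {x}, Wp, Wm] : Fin 3 → Submodule ℝ V))
    (ω : V →ₗ[ℝ] V →ₗ[ℝ] ℝ)
    (hωalt : ∀ v : V, ω v v = 0)
    (hωrad : LinearMap.ker ω = Submodule.span ℝ {x})
    (hωp : ∀ u ∈ Wp, ∀ v ∈ Wp, ω u v = 0)
    (hωm : ∀ u ∈ Wm, ∀ v ∈ Wm, ω u v = 0)
    (g : V →ₗ[ℝ] V →ₗ[ℝ] ℝ)
    (hgsymm : ∀ u v : V, g u v = g v u)
    (hgxx : g x x = 1)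
    (hgxp : ∀ w ∈ Wp, g x w = 0)
    (hgxm : ∀ w ∈ Wm, g x w = 0)
    (hgp : ∀ u ∈ Wp, ∀ v ∈ Wp, g u v = 0)
    (hgm : ∀ u ∈ Wm, ∀ v ∈ Wm, g u v = 0)
    (hgω : ∀ u ∈ Wp, ∀ v ∈ Wm, g u v = ω u v) :
    ∀ v : V, (∀ w : V, g v w = 0) → v = 0 := by
  -- antisymmetry of ω
  have hanti : ∀ u v : V, ω u v = -ω v u := by
    intro u v
    have h := hωalt (u + v)
    simp only [map_add, LinearMap.add_apply, hωalt] at h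
    linarith
  -- ω x = 0 and ω _ x = 0
  have hωx : ∀ w : V, ω x w = 0 := by
    intro w
    have : x ∈ LinearMap.ker ω := hωrad ▸ Submodule.mem_span_singleton_self x
    rw [LinearMap.mem_ker] at this
    rw [this]; rfl
  have hωx' : ∀ w : V, ω w x = 0 := fun w => by rw [hanti, hωx, neg_zero]
  -- sup = ⊤
  have hsup : Submodule.span ℝ {x} ⊔ (Wp ⊔ Wm) = ⊤ := by
    have h := hdec.submodule_iSup_eq_top
    rw [← Finset.sup_univ_eq_iSup] at h
    rw [show (Finset.univ.sup fun i => (![Submodule.span ℝ {x}, Wp, Wm] : Fin 3 → Submodule ℝ V) i)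
        = Submodule.span ℝ {x} ⊔ (Wp ⊔ Wm) by
      show Finset.sup {0,1,2} _ = _
      simp [Finset.sup_insert]] at h
    exact h
  -- pairwise disjointness
  have hind := hdec.submodule_iSupIndep
  have hdisjp : Disjoint (Submodule.span ℝ {x}) Wp := by
    have := hind.pairwiseDisjoint (show (0:Fin 3) ≠ 1 by decide)
    simpa [Function.onFun] using this
  have hdisjm : Disjoint (Submodule.span ℝ {x}) Wm := by
    have := hind.pairwiseDisjoint (show (0:Fin 3) ≠ 2 by decide)
    simpa [Function.onFun] using this
  -- decompose a vector
  have hdecomp : ∀ v : V, ∃ (a : ℝ) (p : V) (m : V), p ∈ Wp ∧ m ∈ Wm ∧ v = a • x + (p + m) := by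
    intro v
    have hv : v ∈ Submodule.span ℝ {x} ⊔ (Wp ⊔ Wm) := hsup ▸ Submodule.mem_top
    obtain ⟨y, hy, z, hz, rfl⟩ := Submodule.mem_sup.mp hv
    obtain ⟨p, hp, m, hm, rfl⟩ := Submodule.mem_sup.mp hz
    obtain ⟨a, rfl⟩ := Submodule.mem_span_singleton.mp hy
    exact ⟨a, p, m, hp, hm, rfl⟩
  intro v hv
  obtain ⟨a, p, m, hp, hm, rfl⟩ := hdecomp v
  -- pairing with x gives a = 0
  have ha : a = 0 := by
    have h := hv x
    simp only [map_add, map_smul, LinearMap.add_apply, LinearMap.smul_apply, smul_eq_mul] at h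
    rw [hgxx, ← hgsymm x p, ← hgsymm x m, hgxp p hp, hgxm m hm] at h
    linarith
  subst ha
  simp only [zero_smul, zero_add] at hv ⊢
  -- p = 0
  have hωp0 : ∀ w : V, ω p w = 0 := by
    intro w
    obtain ⟨b, q, n, hq, hn, rfl⟩ := hdecomp w
    have hpn : ω p n = 0 := by
      have h := hv n
      simp only [map_add, LinearMap.add_apply] at h
      rw [hgm m hm n hn, hgω p hp n hn] at h
      linarith
    simp only [map_add, map_smul, LinearMap.add_apply, LinearMap.smul_apply, smul_eq_mul]
    rw [hωx' p, hωp p hp q hq, hpn]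
    ring
  have hpker : p ∈ LinearMap.ker ω := by
    rw [LinearMap.mem_ker]
    ext w
    simp [hωp0 w]
  have hp0 : p = 0 := by
    have : p ∈ Submodule.span ℝ {x} ⊓ Wp := ⟨hωrad ▸ hpker, hp⟩
    rw [hdisjp.eq_bot] at this
    simpa using this
  subst hp0
  simp only [zero_add] at hv ⊢
  -- m = 0
  have hωm0 : ∀ w : V, ω m w = 0 := by
    intro w
    obtain ⟨b, q, n, hq, hn, rfl⟩ := hdecomp w
    have hmq : ω m q = 0 := by
      have h := hv q
      rw [hgsymm m q, hgω q hq m hm, hanti q m] at h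
      linarith
    simp only [map_add, map_smul, LinearMap.add_apply, LinearMap.smul_apply, smul_eq_mul]
    rw [hωx' m, hmq, hωm m hm n hn]
    ring
  have hmker : m ∈ LinearMap.ker ω := by
    rw [LinearMap.mem_ker]
    ext w
    simp [hωm0 w]
  have : m ∈ Submodule.span ℝ {x} ⊓ Wm := ⟨hωrad ▸ hmker, hm⟩
  rw [hdisjm.eq_bot] at this
  simpa using this
end

section
/- Let V be a finite-dimensional real vector space with an internal direct sum decomposition V = ℝx ⊕ W⁺ ⊕ W⁻, where x ≠ 0. Let g be a nondegenerate symmetric bilinear form on V such that g(x,w) = 0 for all w ∈ W⁺ and all w ∈ W⁻, and g vanishes on W⁺ × W⁺ and on W⁻ × W⁻. Let J : V → V be the linear map with J(x) = 0, J(w) = w for w ∈ W⁺ and J(w) = −w for w ∈ W⁻, and define ω(u,v) := g(Ju, v). Then ω is an alternating bilinear form on V and the radical of ω is exactly the line ℝx. -/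
/-- If `V = ℝx ⊕ W⁺ ⊕ W⁻` (internal direct sum, `x ≠ 0`), `g` is a nondegenerate
symmetric bilinear form with `g(x, W⁺ ⊕ W⁻) = 0` and vanishing on `W⁺ × W⁺` and
`W⁻ × W⁻`, and `J` is the linear map with `J x = 0`, `J = id` on `W⁺`, `J = -id`
on `W⁻`, then `ω(u,v) := g(Ju,v)` is an alternating bilinear form whose radical
is exactly the line `ℝx`. -/
theorem stmt_2 (V : Type*) [AddCommGroup V] [Module ℝ V] [FiniteDimensional ℝ V]
    (x : V) (hx : x ≠ 0) (Wp Wm : Submodule ℝ V)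
    (hdec : DirectSum.IsInternal (![Submodule.span ℝ {x}, Wp, Wm] : Fin 3 → Submodule ℝ V))
    (g : V →ₗ[ℝ] V →ₗ[ℝ] ℝ)
    (hgsymm : ∀ u v : V, g u v = g v u)
    (hgnd : ∀ v : V, (∀ w : V, g v w = 0) → v = 0)
    (hgxp : ∀ w ∈ Wp, g x w = 0)
    (hgxm : ∀ w ∈ Wm, g x w = 0)
    (hgp : ∀ u ∈ Wp, ∀ v ∈ Wp, g u v = 0)
    (hgm : ∀ u ∈ Wm, ∀ v ∈ Wm, g u v = 0)
    (J : V →ₗ[ℝ] V)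
    (hJx : J x = 0)
    (hJp : ∀ w ∈ Wp, J w = w)
    (hJm : ∀ w ∈ Wm, J w = -w) :
    (∀ v : V, (g.comp J) v v = 0) ∧
      LinearMap.ker (g.comp J) = Submodule.span ℝ {x} := by
  -- decomposition
  have hsup : Submodule.span ℝ {x} ⊔ Wp ⊔ Wm = ⊤ := by
    have h := hdec.submodule_iSup_eq_top
    apply le_antisymm le_top
    rw [← h]
    apply iSup_le
    intro i
    fin_cases i
    · exact le_trans le_sup_left le_sup_left
    · exact le_trans le_sup_right le_sup_left
    · exact le_sup_right
  have hdecomp : ∀ v : V, ∃ (a : ℝ) (p m : V), p ∈ Wp ∧ m ∈ Wm ∧ v = a • x + p + m := by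
    intro v
    have hv : v ∈ Submodule.span ℝ {x} ⊔ Wp ⊔ Wm := hsup ▸ Submodule.mem_top
    rcases Submodule.mem_sup.mp hv with ⟨u, hu, m, hm, rfl⟩
    rcases Submodule.mem_sup.mp hu with ⟨s, hs, p, hp, rfl⟩
    rcases Submodule.mem_span_singleton.mp hs with ⟨a, rfl⟩
    exact ⟨a, p, m, hp, hm, rfl⟩
  have hdisj : Disjoint Wp Wm := by
    have := hdec.submodule_iSupIndep.pairwiseDisjoint (i := (1 : Fin 3)) (j := 2) (by decide)
    simpa [Function.onFun] using this
  constructor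
  · intro v
    obtain ⟨a, p, m, hp, hm, rfl⟩ := hdecomp v
    simp only [LinearMap.comp_apply, map_add, map_smul, hJx, smul_zero, hJp p hp, hJm m hm,
      zero_add, map_neg, LinearMap.add_apply, LinearMap.neg_apply, LinearMap.smul_apply,
      smul_eq_mul]
    rw [hgp p hp p hp, hgm m hm m hm, hgsymm p x, hgsymm m x, hgxp p hp, hgxm m hm,
      hgsymm m p]
    simp
  · ext v
    simp only [LinearMap.mem_ker, LinearMap.comp_apply]
    constructor
    · intro hv
      have hJv : J v = 0 := by
        apply hgnd
        intro w
        rw [hv]; rfl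
      obtain ⟨a, p, m, hp, hm, rfl⟩ := hdecomp v
      have : p - m = 0 := by
        have := hJv
        simpa [map_add, map_smul, hJx, hJp p hp, hJm m hm, sub_eq_add_neg] using this
      have hpm : p = m := sub_eq_zero.mp this
      have hm0 : m = 0 := by
        have : m ∈ Wp ⊓ Wm := ⟨hpm ▸ hp, hm⟩
        simpa using hdisj.le_bot this
      have hp0 : p = 0 := hpm.trans hm0
      rw [hp0, hm0, add_zero, add_zero]
      exact Submodule.smul_mem _ _ (Submodule.mem_span_singleton_self x)
    · intro hv
      rcases Submodule.mem_span_singleton.mp hv with ⟨a, rfl⟩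
      simp [map_smul, hJx]
end

section
/- Let V be a finite-dimensional real vector space and B a nonzero alternating bilinear form on V satisfying B(v,w)·B(x,y) − B(v,x)·B(w,y) + B(v,y)·B(w,x) = 0 for all v,w,x,y ∈ V (this identity expresses B ∧ B = 0). Then the radical of B has codimension exactly 2, i.e. dim V − dim{v ∈ V | B(v,·) ≡ 0} = 2. -/
/-- If `B` is a nonzero alternating bilinear form on a finite-dimensional real
vector space satisfying the Plücker-type identity expressing `B ∧ B = 0`, then
the radical of `B` has codimension exactly `2`. -/
theorem stmt_3 (V : Type*) [AddCommGroup V] [Module ℝ V] [FiniteDimensional ℝ V]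
    (B : V →ₗ[ℝ] V →ₗ[ℝ] ℝ)
    (halt : ∀ v : V, B v v = 0)
    (hne : B ≠ 0)
    (hpluecker : ∀ v w x y : V,
      B v w * B x y - B v x * B w y + B v y * B w x = 0) :
    Module.finrank ℝ V - Module.finrank ℝ (LinearMap.ker B) = 2 := by
  have hskew : ∀ x y : V, B x y = - B y x := by
    intro x y
    have h := halt (x + y)
    simp only [map_add, LinearMap.add_apply, halt x, halt y] at h
    linarith
  have hex : ∃ v w : V, B v w ≠ 0 := by
    by_contra h
    push_neg at h
    exact hne (by ext v w; simp [h])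
  obtain ⟨v, w, hc⟩ := hex
  set φ : V →ₗ[ℝ] ℝ × ℝ := (B v).prod (B w) with hφ
  have hker : LinearMap.ker φ = LinearMap.ker B := by
    ext x
    simp only [hφ, LinearMap.mem_ker, LinearMap.prod_apply, Function.prod, Prod.mk_eq_zero]
    constructor
    · rintro ⟨h1, h2⟩
      ext y
      have hp := hpluecker v w x y
      rw [h1, h2] at hp
      have : B v w * B x y = 0 := by linarith
      have := mul_eq_zero.mp this
      simpa [hc] using this
    · intro hx
      constructor
      · rw [hskew v x, hx]; simp
      · rw [hskew w x, hx]; simp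
  have hrange : LinearMap.range φ = ⊤ := by
    rw [Submodule.eq_top_iff']
    rintro ⟨a, b⟩
    refine ⟨(-b / B v w) • v + (a / B v w) • w, ?_⟩
    simp only [hskew w v, hφ, LinearMap.prod_apply, Function.prod, map_add, map_smul, halt v, halt w,
      Prod.smul_mk, smul_eq_mul, Prod.mk_add_mk, mul_zero, zero_add, add_zero,
      mul_neg, neg_zero, Prod.mk.injEq]
    constructor <;> field_simp
  have h1 := LinearMap.finrank_range_add_finrank_ker φ
  rw [hker, hrange] at h1
  have h2 : Module.finrank ℝ (⊤ : Submodule ℝ (ℝ × ℝ)) = 2 := by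
    simp [finrank_top]
  rw [h2] at h1
  omega
end

section
/- Let V be a finite-dimensional real vector space that is the internal direct sum of two subspaces W⁺ and W⁻, and let B be an alternating bilinear form on V vanishing on W⁺ × W⁺ and on W⁻ × W⁻. Then the radical R of B satisfies R = (R ∩ W⁺) ⊕ (R ∩ W⁻). If moreover dim W⁺ = dim W⁻ = 2, B ≠ 0, and B(v,w)·B(x,y) − B(v,x)·B(w,y) + B(v,y)·B(w,x) = 0 for all v,w,x,y ∈ V, then dim(R ∩ W⁺) = dim(R ∩ W⁻) = 1. -/
/-- Let `V = W⁺ ⊕ W⁻` (internal direct sum) and `B` an alternating bilinear form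
vanishing on `W⁺ × W⁺` and on `W⁻ × W⁻`.  Then the radical `R` of `B` satisfies
`R = (R ⊓ W⁺) ⊔ (R ⊓ W⁻)`; and if moreover `dim W⁺ = dim W⁻ = 2`, `B ≠ 0` and
`B ∧ B = 0` (expressed by the Plücker-type identity), then
`dim (R ⊓ W⁺) = dim (R ⊓ W⁻) = 1`. -/
theorem stmt_4 (V : Type*) [AddCommGroup V] [Module ℝ V] [FiniteDimensional ℝ V]
    (Wp Wm : Submodule ℝ V)
    (hcompl : IsCompl Wp Wm)
    (B : V →ₗ[ℝ] V →ₗ[ℝ] ℝ)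
    (halt : ∀ v : V, B v v = 0)
    (hisoP : ∀ u ∈ Wp, ∀ v ∈ Wp, B u v = 0)
    (hisoM : ∀ u ∈ Wm, ∀ v ∈ Wm, B u v = 0) :
    LinearMap.ker B = (LinearMap.ker B ⊓ Wp) ⊔ (LinearMap.ker B ⊓ Wm) ∧
      (Module.finrank ℝ Wp = 2 → Module.finrank ℝ Wm = 2 → B ≠ 0 →
        (∀ v w x y : V, B v w * B x y - B v x * B w y + B v y * B w x = 0) →
        Module.finrank ℝ ↥(LinearMap.ker B ⊓ Wp) = 1 ∧
          Module.finrank ℝ ↥(LinearMap.ker B ⊓ Wm) = 1) := by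
  have hdec : ∀ v : V, ∃ p ∈ Wp, ∃ m ∈ Wm, v = p + m := by
    intro v
    have hv : v ∈ Wp ⊔ Wm := by rw [hcompl.sup_eq_top]; trivial
    rcases Submodule.mem_sup.mp hv with ⟨p, hp, m, hm, h⟩
    exact ⟨p, hp, m, hm, h.symm⟩
  have hskew : ∀ v w : V, B w v = - B v w := by
    intro v w
    have h := halt (v + w)
    simp only [map_add, LinearMap.add_apply, halt] at h
    linarith
  -- Part 1
  have hker : LinearMap.ker B = (LinearMap.ker B ⊓ Wp) ⊔ (LinearMap.ker B ⊓ Wm) := by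
    apply le_antisymm
    · intro v hv
      rcases hdec v with ⟨p, hp, m, hm, rfl⟩
      have hvk : ∀ w : V, B (p + m) w = 0 := by
        intro w
        have := LinearMap.mem_ker.mp hv
        rw [this]; rfl
      have hpk : p ∈ LinearMap.ker B := by
        rw [LinearMap.mem_ker]
        ext w
        rcases hdec w with ⟨wp, hwp, wm, hwm, rfl⟩
        have h1 := hvk wm
        have h2 := hisoM m hm wm hwm
        have h3 := hisoP p hp wp hwp
        simp only [map_add, LinearMap.add_apply] at h1 ⊢
        simp only [LinearMap.zero_apply]
        linarith
      have hmk : m ∈ LinearMap.ker B := by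
        rw [LinearMap.mem_ker]
        ext w
        rcases hdec w with ⟨wp, hwp, wm, hwm, rfl⟩
        have h1 := hvk wp
        have h2 := hisoM m hm wm hwm
        have h3 := hisoP p hp wp hwp
        simp only [map_add, LinearMap.add_apply] at h1 ⊢
        simp only [LinearMap.zero_apply]
        linarith
      exact Submodule.add_mem_sup ⟨hpk, hp⟩ ⟨hmk, hm⟩
    · exact sup_le inf_le_left inf_le_left
  refine ⟨hker, ?_⟩
  intro h2p h2m hBne hpl
  -- If Wp ≤ ker B or Wm ≤ ker B then B = 0
  have hBzero : ∀ W W' : Submodule ℝ V, IsCompl W W' →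
      (∀ u ∈ W, ∀ v ∈ W', B u v = 0) →
      (∀ u ∈ W', ∀ v ∈ W', B u v = 0) →
      W ≤ LinearMap.ker B → B = 0 := by
    intro W W' hc hWW' hW' hWk
    ext v w
    have hv : v ∈ W ⊔ W' := by rw [hc.sup_eq_top]; trivial
    rcases Submodule.mem_sup.mp hv with ⟨p, hp, m, hm, rfl⟩
    have hw : w ∈ W ⊔ W' := by rw [hc.sup_eq_top]; trivial
    rcases Submodule.mem_sup.mp hw with ⟨p', hp', m', hm', rfl⟩
    have h1 : B p (p' + m') = 0 := by
      have := LinearMap.mem_ker.mp (hWk hp); rw [this]; rfl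
    have h2 : B p' (p + m) = 0 := by
      have := LinearMap.mem_ker.mp (hWk hp'); rw [this]; rfl
    have h3 := hW' m hm m' hm'
    have h5 := hWW' p hp m' hm'
    have h6 := hWW' p' hp' m hm
    have h7 := hskew p' m
    simp only [map_add, LinearMap.add_apply, LinearMap.zero_apply] at *
    linarith
  -- finrank V = 4
  have hV4 : Module.finrank ℝ V = 4 := by
    have := Submodule.finrank_add_eq_of_isCompl hcompl
    omega
  -- B nonzero gives a b with B a b ≠ 0
  have hab : ∃ a b : V, B a b ≠ 0 := by
    by_contra h
    push_neg at h
    apply hBne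
    ext a b
    simp [h a b]
  rcases hab with ⟨a, b, hc⟩
  -- ker B ⊔ span {a, b} = ⊤
  have htop : LinearMap.ker B ⊔ Submodule.span ℝ {a, b} = ⊤ := by
    rw [eq_top_iff]
    intro v _
    set c := B a b with hcdef
    have hvk : v - ((B v b / c) • a - (B v a / c) • b) ∈ LinearMap.ker B := by
      rw [LinearMap.mem_ker]
      ext w
      have hp := hpl v w a b
      have h1 := hskew a w
      have h2 := hskew b w
      simp only [map_sub, map_smul, LinearMap.sub_apply, LinearMap.smul_apply,
        smul_eq_mul, LinearMap.zero_apply]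
      rw [h1, h2, ← hcdef] at hp
      field_simp
      linarith
    have hspan : (B v b / c) • a - (B v a / c) • b ∈ Submodule.span ℝ {a, b} := by
      rw [Submodule.mem_span_pair]
      exact ⟨B v b / c, -(B v a / c), by rw [neg_smul, ← sub_eq_add_neg]⟩
    have : v = (v - ((B v b / c) • a - (B v a / c) • b)) +
        ((B v b / c) • a - (B v a / c) • b) := by abel
    rw [this]
    exact Submodule.add_mem_sup hvk hspan
  -- finrank ker B ≥ 2
  have hspan2 : Module.finrank ℝ (Submodule.span ℝ ({a, b} : Set V)) ≤ 2 := by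
    have h1 : Submodule.span ℝ ({a, b} : Set V) =
        Submodule.span ℝ {a} ⊔ Submodule.span ℝ {b} := by
      rw [← Submodule.span_union]; congr 1
    rw [h1]
    have h2 := Submodule.finrank_sup_add_finrank_inf_eq
      (Submodule.span ℝ ({a} : Set V)) (Submodule.span ℝ ({b} : Set V))
    have h3 : Module.finrank ℝ (Submodule.span ℝ ({a} : Set V)) ≤ 1 := by
      rcases eq_or_ne a 0 with ha | ha
      · rw [ha, Submodule.span_zero_singleton]; simp
      · rw [finrank_span_singleton ha]
    have h4 : Module.finrank ℝ (Submodule.span ℝ ({b} : Set V)) ≤ 1 := by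
      rcases eq_or_ne b 0 with hb | hb
      · rw [hb, Submodule.span_zero_singleton]; simp
      · rw [finrank_span_singleton hb]
    omega
  have hkge : 2 ≤ Module.finrank ℝ (LinearMap.ker B) := by
    have h1 := Submodule.finrank_sup_add_finrank_inf_eq
      (LinearMap.ker B) (Submodule.span ℝ ({a, b} : Set V))
    rw [htop] at h1
    have h2 : Module.finrank ℝ (⊤ : Submodule ℝ V) = 4 := by
      rw [finrank_top]; exact hV4
    omega
  -- finranks of the pieces
  have hle1 : Module.finrank ℝ ↥(LinearMap.ker B ⊓ Wp) ≤ 2 := by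
    have := Submodule.finrank_mono (inf_le_right :
      LinearMap.ker B ⊓ Wp ≤ Wp)
    omega
  have hle2 : Module.finrank ℝ ↥(LinearMap.ker B ⊓ Wm) ≤ 2 := by
    have := Submodule.finrank_mono (inf_le_right :
      LinearMap.ker B ⊓ Wm ≤ Wm)
    omega
  have hne1 : Module.finrank ℝ ↥(LinearMap.ker B ⊓ Wp) ≠ 2 := by
    intro h
    have heq : LinearMap.ker B ⊓ Wp = Wp := by
      apply Submodule.eq_of_le_of_finrank_eq inf_le_right
      rw [h, h2p]
    have hWk : Wp ≤ LinearMap.ker B := by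
      rw [← heq]; exact inf_le_left
    exact hBne (hBzero Wp Wm hcompl (fun u hu v hv => by
      -- need B u v = 0 for u ∈ Wp, v ∈ Wm; follows since u ∈ ker
      have := LinearMap.mem_ker.mp (hWk hu); rw [this]; rfl) hisoM hWk)
  have hne2 : Module.finrank ℝ ↥(LinearMap.ker B ⊓ Wm) ≠ 2 := by
    intro h
    have heq : LinearMap.ker B ⊓ Wm = Wm := by
      apply Submodule.eq_of_le_of_finrank_eq inf_le_right
      rw [h, h2m]
    have hWk : Wm ≤ LinearMap.ker B := by
      rw [← heq]; exact inf_le_left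
    exact hBne (hBzero Wm Wp hcompl.symm (fun u hu v hv => by
      have := LinearMap.mem_ker.mp (hWk hu); rw [this]; rfl) hisoP hWk)
  have hsum : Module.finrank ℝ ↥(LinearMap.ker B ⊓ Wp) +
      Module.finrank ℝ ↥(LinearMap.ker B ⊓ Wm) =
      Module.finrank ℝ (LinearMap.ker B) := by
    have h1 := Submodule.finrank_sup_add_finrank_inf_eq
      (LinearMap.ker B ⊓ Wp) (LinearMap.ker B ⊓ Wm)
    have h2 : (LinearMap.ker B ⊓ Wp) ⊓ (LinearMap.ker B ⊓ Wm) = ⊥ := by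
      apply le_antisymm _ bot_le
      intro x hx
      exact hcompl.disjoint.le_bot ⟨hx.1.2, hx.2.2⟩
    rw [h2, ← hker] at h1
    simp only [finrank_bot, add_zero] at h1
    omega
  have hker2 : Module.finrank ℝ (LinearMap.ker B) ≤ 4 := by
    have := Submodule.finrank_le (LinearMap.ker B)
    omega
  constructor <;> omega
end

section
/- Let L be a Lie algebra over ℝ, let x, u, p, m ∈ L and c ∈ ℝ satisfy ⁅x,u⁆ = −u, ⁅u,p⁆ = 0, ⁅p,m⁆ = x, and ⁅u,m⁆ = c·p. Then u = 0. -/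
/-- In a real Lie algebra, if `⁅x,u⁆ = -u`, `⁅u,p⁆ = 0`, `⁅p,m⁆ = x` and
`⁅u,m⁆ = c • p`, then `u = 0`. -/
theorem stmt_5 (L : Type*) [LieRing L] [LieAlgebra ℝ L]
    (x u p m : L) (c : ℝ)
    (h1 : ⁅x, u⁆ = -u)
    (h2 : ⁅u, p⁆ = 0)
    (h3 : ⁅p, m⁆ = x)
    (h4 : ⁅u, m⁆ = c • p) :
    u = 0 := by
  have key : ⁅u, x⁆ = 0 := by
    rw [← h3, leibniz_lie, h2, h4, lie_smul, lie_self, zero_lie, smul_zero, add_zero]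
  have : -u = 0 := by rw [← h1, ← lie_skew, key, neg_zero]
  simpa using this
end

section
/- Let L be a Lie algebra over ℝ, let x, u, p, m, n ∈ L and c, d ∈ ℝ satisfy ⁅x,u⁆ = −u, ⁅u,p⁆ = 0, ⁅p,m⁆ = x, ⁅u,m⁆ = c·n, and ⁅n,p⁆ = d·u. If u ≠ 0, then c·d = −1. -/
/-- In a real Lie algebra, if `⁅x,u⁆ = -u`, `⁅u,p⁆ = 0`, `⁅p,m⁆ = x`,
`⁅u,m⁆ = c • n`, `⁅n,p⁆ = d • u` and `u ≠ 0`, then `c * d = -1`. -/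
theorem stmt_6 (L : Type*) [LieRing L] [LieAlgebra ℝ L]
    (x u p m n : L) (c d : ℝ)
    (h1 : ⁅x, u⁆ = -u)
    (h2 : ⁅u, p⁆ = 0)
    (h3 : ⁅p, m⁆ = x)
    (h4 : ⁅u, m⁆ = c • n)
    (h5 : ⁅n, p⁆ = d • u)
    (hu : u ≠ 0) :
    c * d = -1 := by
  have hJ : ⁅u, ⁅p, m⁆⁆ = ⁅⁅u, p⁆, m⁆ + ⁅p, ⁅u, m⁆⁆ := leibniz_lie u p m
  rw [h3, h2, h4, zero_lie, zero_add, lie_smul, ← lie_skew p n, h5, ← lie_skew u x, h1,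
    neg_neg, smul_neg, smul_smul] at hJ
  -- hJ : u = -(c * d) • u
  have h : (1 + c * d) • u = 0 := by
    rw [add_smul, one_smul]
    nth_rewrite 1 [hJ]
    simp
  rcases smul_eq_zero.mp h with h' | h'
  · linarith [h']
  · exact absurd h' hu
end

section
/- Let L be a Lie algebra over ℝ containing elements X, S, L₀, p₁, p₂, m₁, m₂ and real numbers a, b, a′, b′, a″, b″ satisfying: ⁅X,p₁⁆ = −p₁, ⁅X,p₂⁆ = −p₂, ⁅X,m₁⁆ = m₁, ⁅X,m₂⁆ = m₂; ⁅S,p₁⁆ = −p₁, ⁅S,p₂⁆ = p₂, ⁅S,m₁⁆ = m₁, ⁅S,m₂⁆ = −m₂; ⁅L₀,p₁⁆ = p₁, ⁅L₀,p₂⁆ = p₂, ⁅L₀,m₁⁆ = −m₁, ⁅L₀,m₂⁆ = −m₂; ⁅p₁,p₂⁆ = 0, ⁅m₁,m₂⁆ = 0; ⁅p₁,m₁⁆ = a·S + b·L₀, ⁅p₁,m₂⁆ = a′·S + b′·L₀, ⁅p₂,m₂⁆ = X + a″·S + b″·L₀. If p₁ and p₂ are linearly independent and m₁ and m₂ are linearly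 independent, then a′ = 0 and b′ = 0; in particular ⁅p₁,m₂⁆ = 0. -/
/-- The Jacobi-identity computation of Lemma 5.2.1: given the listed bracket
relations among `X, S, L₀, p₁, p₂, m₁, m₂`, with `p₁, p₂` linearly independent
and `m₁, m₂` linearly independent, the structure constants `a′, b′` vanish, so
`⁅p₁, m₂⁆ = 0`. -/
theorem stmt_9 (L : Type*) [LieRing L] [LieAlgebra ℝ L]
    (X S L₀ p₁ p₂ m₁ m₂ : L) (a b a' b' a'' b'' : ℝ)
    (hXp₁ : ⁅X, p₁⁆ = -p₁) (hXp₂ : ⁅X, p₂⁆ = -p₂)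
    (hXm₁ : ⁅X, m₁⁆ = m₁) (hXm₂ : ⁅X, m₂⁆ = m₂)
    (hSp₁ : ⁅S, p₁⁆ = -p₁) (hSp₂ : ⁅S, p₂⁆ = p₂)
    (hSm₁ : ⁅S, m₁⁆ = m₁) (hSm₂ : ⁅S, m₂⁆ = -m₂)
    (hLp₁ : ⁅L₀, p₁⁆ = p₁) (hLp₂ : ⁅L₀, p₂⁆ = p₂)
    (hLm₁ : ⁅L₀, m₁⁆ = -m₁) (hLm₂ : ⁅L₀, m₂⁆ = -m₂)
    (hpp : ⁅p₁, p₂⁆ = 0) (hmm : ⁅m₁, m₂⁆ = 0)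
    (hpm₁ : ⁅p₁, m₁⁆ = a • S + b • L₀)
    (hpm₂ : ⁅p₁, m₂⁆ = a' • S + b' • L₀)
    (hpm₃ : ⁅p₂, m₂⁆ = X + a'' • S + b'' • L₀)
    (hpind : LinearIndependent ℝ ![p₁, p₂])
    (hmind : LinearIndependent ℝ ![m₁, m₂]) :
    a' = 0 ∧ b' = 0 ∧ ⁅p₁, m₂⁆ = 0 := by
  have hpp' : ⁅p₂, p₁⁆ = 0 := by rw [← lie_skew, hpp, neg_zero]
  have h1' : ⁅p₂, S⁆ = -p₂ := by rw [← lie_skew, hSp₂]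
  have h2' : ⁅p₂, L₀⁆ = -p₂ := by rw [← lie_skew, hLp₂]
  have h3' : ⁅p₁, X⁆ = p₁ := by rw [← lie_skew, hXp₁, neg_neg]
  have h4' : ⁅p₁, S⁆ = p₁ := by rw [← lie_skew, hSp₁, neg_neg]
  have h5' : ⁅p₁, L₀⁆ = -p₁ := by rw [← lie_skew, hLp₁]
  have h6' : ⁅m₁, p₁⁆ = -(a • S + b • L₀) := by rw [← lie_skew, hpm₁]
  have h7' : ⁅m₁, S⁆ = -m₁ := by rw [← lie_skew, hSm₁]
  have h8' : ⁅m₁, L₀⁆ = m₁ := by rw [← lie_skew, hLm₁, neg_neg]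
  have j1 := leibniz_lie p₂ p₁ m₂
  rw [hpm₂, hpm₃, hpp', zero_lie, zero_add, lie_add, lie_smul, lie_smul,
      h1', h2', lie_add, lie_add, lie_smul, lie_smul, h3', h4', h5'] at j1
  have key1 : (1 + a'' - b'') • p₁ + (a' + b') • p₂ = 0 := by
    linear_combination (norm := module) -j1
  have j2 := leibniz_lie m₁ p₁ m₂
  rw [hpm₂, hmm, lie_zero, add_zero, h6', lie_add, lie_smul, lie_smul, h7', h8',
      neg_lie, add_lie, smul_lie, smul_lie, hSm₂, hLm₂] at j2
  have key2 : (b' - a') • m₁ + (-(a + b)) • m₂ = 0 := by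
    linear_combination (norm := module) j2
  rw [LinearIndependent.pair_iff] at hpind hmind
  have e1 := (hpind _ _ key1).2
  have e2 := (hmind _ _ key2).1
  have ha : a' = 0 := by linarith
  have hb : b' = 0 := by linarith
  exact ⟨ha, hb, by rw [hpm₂, ha, hb, zero_smul, zero_smul, zero_add]⟩
end
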